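/- arXiv:1401.3173 — 3 statements merged into one kernel-verified Lean document; each statement's English description precedes it below -/
import Mathlib

section
/- For every nondeterministic finite automaton M over an alphabet α with a finite state type Q, there exist a finite type S with card S ≤ card Q + 2 and a deterministic finite automaton D over the product alphabet α × Q with state type S such that the projection of the language accepted by D equals the language accepted by M, i.e. π(D.accepts) = M.accepts. -/
/-- The projection of a language over a product alphabet `α × β` onto `α`,
obtained by mapping each letter of each word to its first component. -/
def projLang {α β : Type} (L : Language (α × β)) : Language α :=
  (fun w : List (α × β) => w.map Prod.fst) '' L

/-!
The second component of each letter guesses the state the NFA moves to, and the DFA only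
remembers the last guess and checks that it is a legal transition, falling into a dead state
otherwise. Every run of `M` on `x` is thus spelled out by exactly one word over `α × Q`
projecting to `x`, and that word reaches an accepting state of the DFA iff the run accepts.
-/

namespace NFA

variable {α Q : Type} (M : NFA α Q)

/-- The states a partial run may be in: `none` is the beginning of the run, `some p` the run
currently at `p`. -/
def freeInputStates : Option Q → Set Q
  | none => M.start
  | some p => {p}

open Classical in
/-- `none` is the dead state, entered on an illegal guess. -/
noncomputable def freeInputDFA : DFA (α × Q) (Option (Option Q)) where
  step s l := s.bind fun t =>
    if l.2 ∈ M.stepSet (M.freeInputStates t) l.1 then some (some l.2) else none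
  start := some none
  accept := {s | ∃ t ∈ s, ∃ q ∈ M.freeInputStates t, q ∈ M.accept}

theorem freeInputStates_subset_eval {w : List (α × Q)} {t : Option Q}
    (h : M.freeInputDFA.eval w = some t) :
    M.freeInputStates t ⊆ M.eval (w.map Prod.fst) := by
  induction w using List.reverseRecOn generalizing t with
  | nil =>
    cases h
    exact subset_rfl
  | append_singleton w l ih =>
    rw [DFA.eval_append_singleton] at h
    obtain ⟨s, hs, hstep⟩ := Option.bind_eq_some_iff.mp h
    split_ifs at hstep with hl
    cases hstep
    rw [List.map_append, List.map_singleton, NFA.eval_append_singleton]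
    rintro q rfl
    obtain ⟨p, hp, hq⟩ := M.mem_stepSet.mp hl
    exact M.mem_stepSet.mpr ⟨p, ih hs hp, hq⟩

theorem exists_freeInputDFA_eval_of_mem_eval {x : List α} {q : Q} (hq : q ∈ M.eval x) :
    ∃ w : List (α × Q), w.map Prod.fst = x ∧
      ∃ t, M.freeInputDFA.eval w = some t ∧ q ∈ M.freeInputStates t := by
  induction x using List.reverseRecOn generalizing q with
  | nil => exact ⟨[], rfl, none, rfl, hq⟩
  | append_singleton x a ih =>
    rw [NFA.eval_append_singleton, NFA.mem_stepSet] at hq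
    obtain ⟨p, hp, hpq⟩ := hq
    obtain ⟨w, rfl, t, hw, hpt⟩ := ih hp
    have hlegal : q ∈ M.stepSet (M.freeInputStates t) a := M.mem_stepSet.mpr ⟨p, hpt, hpq⟩
    refine ⟨w ++ [(a, q)], by simp, some q, ?_, rfl⟩
    rw [DFA.eval_append_singleton, hw]
    exact if_pos hlegal

theorem projLang_freeInputDFA_accepts : projLang M.freeInputDFA.accepts = M.accepts := by
  ext x
  constructor
  · rintro ⟨w, ⟨t, ht, q, hqt, hq⟩, rfl⟩
    exact ⟨q, hq, M.freeInputStates_subset_eval ht hqt⟩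
  · rintro ⟨q, hq, hqx⟩
    obtain ⟨w, rfl, t, hw, hqt⟩ := M.exists_freeInputDFA_eval_of_mem_eval hqx
    exact ⟨w, ⟨t, hw, q, hqt, hq⟩, rfl⟩

end NFA

/-- For every NFA `M` over `α` with finite state type `Q`, there exist a finite type `S`
with `card S ≤ card Q + 2` and a DFA `D` over `α × Q` with state type `S` such that
`π(D.accepts) = M.accepts`. -/
theorem nfa_to_dfa_free_inputs {α Q : Type} [Fintype Q] (M : NFA α Q) :
    ∃ (S : Type) (_ : Fintype S), Fintype.card S ≤ Fintype.card Q + 2 ∧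
      ∃ D : DFA (α × Q) S, projLang D.accepts = M.accepts :=
  ⟨Option (Option Q), inferInstance, by simp, M.freeInputDFA, M.projLang_freeInputDFA_accepts⟩
end

section
/- Let σ be a type and ts = [(S₁,b₁),…,(Sₙ,bₙ)] a list of n pairs of a subset of σ and a Boolean star flag. Then there exists a nondeterministic finite automaton over σ with state type Fin (n+1) whose accepted language equals the chain language L(ts). -/
/-!
Induction on the list. An automaton `M` for `L(ts)` becomes one for `L((S, b) :: ts)` by adding a
single fresh start state. If `b = false` the new state reads a letter of `S` and moves to the start
states of `M`. If `b = true` it loops on the letters of `S`, can also make any first move of `M`,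
and accepts iff `M` accepts the empty word; its language `X` solves `X = S·X + L(M)`, so
Arden's lemma identifies it with `S∗·L(M)`. Each step adds one state, which gives `n + 1` states.
-/

/-- The single-symbol language of a set `S ⊆ σ`: all length-one words whose letter lies in `S`. -/
def singleLang {σ : Type} (S : Set σ) : Language σ := {w | ∃ a ∈ S, w = [a]}

/-- The chain language of a list `ts = [(S₁,b₁),…,(Sₙ,bₙ)]`: the concatenation
`L₁ * ⋯ * Lₙ` where `Lᵢ` is the single-symbol language of `Sᵢ` if `bᵢ = false`, and its
Kleene star if `bᵢ = true`.  This is the language of the SERE chain `x₁y₁; …; xₙyₙ`. -/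
def chainLang {σ : Type} (ts : List (Set σ × Bool)) : Language σ :=
  (ts.map fun p => if p.2 then KStar.kstar (singleLang p.1) else singleLang p.1).prod

open scoped Computability

section singleLang

variable {σ : Type} {S : Set σ} {L : Language σ}

theorem nil_notMem_singleLang : [] ∉ singleLang S := by
  rintro ⟨a, -, ⟨⟩⟩

theorem nil_notMem_singleLang_mul : [] ∉ singleLang S * L := by
  rw [Language.mem_mul]
  rintro ⟨_, ⟨a, -, rfl⟩, _, -, ⟨⟩⟩

theorem cons_mem_singleLang_mul {a : σ} {x : List σ} :
    a :: x ∈ singleLang S * L ↔ a ∈ S ∧ x ∈ L := by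
  rw [Language.mem_mul]
  constructor
  · rintro ⟨_, ⟨b, hb, rfl⟩, y, hy, ⟨⟩⟩
    exact ⟨hb, hy⟩
  · rintro ⟨ha, hx⟩
    exact ⟨[a], ⟨a, ha, rfl⟩, x, hx, rfl⟩

end singleLang

theorem chainLang_cons {σ : Type} (S : Set σ) (b : Bool) (ts : List (Set σ × Bool)) :
    chainLang ((S, b) :: ts) = (if b then (singleLang S)∗ else singleLang S) * chainLang ts := by
  simp [chainLang]

namespace NFA

variable {α Q Q' : Type*}

@[simp]
theorem acceptsFrom_empty (M : NFA α Q) : M.acceptsFrom ∅ = 0 := by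
  ext x
  induction x with
  | nil => simp [Language.notMem_zero]
  | cons a x ih => simpa using ih

theorem acceptsFrom_image {M : NFA α Q} {N : NFA α Q'} (f : Q → Q')
    (hstep : ∀ q a, N.step (f q) a = f '' M.step q a)
    (haccept : ∀ q, f q ∈ N.accept ↔ q ∈ M.accept) (T : Set Q) :
    N.acceptsFrom (f '' T) = M.acceptsFrom T := by
  ext x
  induction x generalizing T with
  | nil => simp [haccept]
  | cons a x ih =>
    have hstepSet : N.stepSet (f '' T) a = f '' M.stepSet T a := by
      simp only [stepSet, Set.biUnion_image, Set.image_iUnion₂, hstep]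
    rw [cons_mem_acceptsFrom, cons_mem_acceptsFrom, hstepSet, ih]

def reindex (g : Q ≃ Q') (M : NFA α Q) : NFA α Q' where
  step q a := g '' M.step (g.symm q) a
  start := g '' M.start
  accept := g '' M.accept

@[simp]
theorem accepts_reindex (g : Q ≃ Q') (M : NFA α Q) : (M.reindex g).accepts = M.accepts :=
  acceptsFrom_image g (fun q a => by simp [reindex]) (fun q => g.injective.mem_set_image) _

def nilOnly (α Q : Type*) : NFA α Q := ⟨fun _ _ => ∅, Set.univ, Set.univ⟩

theorem accepts_nilOnly [Nonempty Q] : (nilOnly α Q).accepts = 1 := by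
  ext (_ | ⟨a, x⟩)
  · simp [accepts_eq_acceptsFrom_start, nilOnly]
  · simp [accepts_eq_acceptsFrom_start, nilOnly, stepSet, Language.mem_one, Language.notMem_zero]

def addStartState (M : NFA α Q) (out : α → Set (Option Q)) (final : Prop) :
    NFA α (Option Q) where
  step q a := q.elim (out a) fun p => some '' M.step p a
  start := {none}
  accept := {q | q.elim final (· ∈ M.accept)}

section addStartState

variable (M : NFA α Q) (out : α → Set (Option Q)) (final : Prop)

theorem acceptsFrom_addStartState_some (T : Set Q) :
    (M.addStartState out final).acceptsFrom (some '' T) = M.acceptsFrom T :=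
  acceptsFrom_image some (fun _ _ => rfl) (fun _ => Iff.rfl) T

theorem nil_mem_accepts_addStartState : [] ∈ (M.addStartState out final).accepts ↔ final := by
  simp [accepts_eq_acceptsFrom_start, addStartState]

theorem cons_mem_accepts_addStartState {a : α} {x : List α} :
    a :: x ∈ (M.addStartState out final).accepts ↔
      x ∈ (M.addStartState out final).acceptsFrom (out a) := by
  simp [accepts_eq_acceptsFrom_start, addStartState]

end addStartState

open scoped Classical in
def prependLetter (M : NFA α Q) (S : Set α) : NFA α (Option Q) :=
  M.addStartState (fun a => if a ∈ S then some '' M.start else ∅) False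

open scoped Classical in
/-- The ε-free form of a loop on `S` followed by an ε-move into `M`. -/
def prependStar (M : NFA α Q) (S : Set α) : NFA α (Option Q) :=
  M.addStartState (fun a => (if a ∈ S then {none} else ∅) ∪ some '' M.stepSet M.start a)
    ([] ∈ M.accepts)

section prepend

variable {σ Q : Type} (M : NFA σ Q) (S : Set σ)

theorem accepts_prependLetter : (M.prependLetter S).accepts = singleLang S * M.accepts := by
  ext (_ | ⟨a, x⟩)
  · simp [prependLetter, nil_mem_accepts_addStartState, nil_notMem_singleLang_mul]
  · rw [prependLetter, cons_mem_accepts_addStartState, cons_mem_singleLang_mul]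
    split_ifs with ha
    · simp [ha, acceptsFrom_addStartState_some, accepts_eq_acceptsFrom_start]
    · simp [ha, Language.notMem_zero]

theorem accepts_prependStar : (M.prependStar S).accepts = (singleLang S)∗ * M.accepts := by
  rw [← Language.self_eq_mul_add_iff nil_notMem_singleLang]
  ext (_ | ⟨a, x⟩) <;> rw [Language.mem_add]
  · simp [prependStar, nil_mem_accepts_addStartState, nil_notMem_singleLang_mul]
  · rw [prependStar, cons_mem_accepts_addStartState, acceptsFrom_union, Language.mem_add,
      acceptsFrom_addStartState_some, ← cons_mem_acceptsFrom, ← accepts_eq_acceptsFrom_start,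
      cons_mem_singleLang_mul]
    split_ifs with ha
    · simp only [ha, true_and]
      rfl
    · simp [ha, Language.notMem_zero]

end prepend

end NFA

/-- For every list `ts` of `n` pairs of a subset of `σ` and a star flag, there is an NFA
over `σ` with state type `Fin (n+1)` accepting exactly the chain language `L(ts)`. -/
theorem chain_nfa_exists {σ : Type} (ts : List (Set σ × Bool)) :
    ∃ M : NFA σ (Fin (ts.length + 1)), M.accepts = chainLang ts := by
  induction ts with
  | nil => exact ⟨NFA.nilOnly σ _, NFA.accepts_nilOnly⟩
  | cons p ts ih =>
    obtain ⟨M, hM⟩ := ih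
    obtain ⟨S, _ | _⟩ := p
    · exact ⟨(M.prependLetter S).reindex (finSuccEquiv _).symm, by
        rw [NFA.accepts_reindex, NFA.accepts_prependLetter, hM, chainLang_cons]; rfl⟩
    · exact ⟨(M.prependStar S).reindex (finSuccEquiv _).symm, by
        rw [NFA.accepts_reindex, NFA.accepts_prependStar, hM, chainLang_cons]; rfl⟩
end

section
/- Let σ be a type and ts = [(S₁,b₁),…,(Sₙ,bₙ)] a list of n pairs of a subset of σ and a Boolean star flag. Then there exist a finite type S with card S ≤ n + 3 and a deterministic finite automaton D over the product alphabet σ × Fin (n+1) with state type S such that π(D.accepts) = L(ts). -/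
/-!
Each letter carries a tag `j` naming the factor that reads it. The automaton sits in state `i`
once the factors before `i` are finished; it accepts the tagged letter `(a, j)` when the factors
`i, …, j - 1` are starred (so they may be skipped) and `a ∈ Sⱼ`, and then moves to `j` if factor
`j` is starred (it may read again) and to `j + 1` otherwise. With `Lᵢ` the chain language of the
suffix `ts.drop i`, the projection of the words accepted from `i` is `Lᵢ`: the inclusion `⊆`
follows by induction on the tagged word, and `⊇` by downward induction on `i` from
`Lᵢ = Sᵢ Lᵢ₊₁` or `Lᵢ = Sᵢ∗ Lᵢ₊₁`, the starred case by the Kleene-algebra law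
`a b ≤ b → a∗ b ≤ b`.
-/

open Computability

section General

variable {α β γ : Type}

theorem projLang_mono {L L' : Language (α × β)} (h : L ≤ L') : projLang L ≤ projLang L' :=
  Set.image_mono h

theorem singleLang_mul_projLang_acceptsFrom_le (M : DFA (α × β) γ) {S : Set α} {s t : γ} (b : β)
    (h : ∀ a ∈ S, M.step s (a, b) = t) :
    singleLang S * projLang (M.acceptsFrom t) ≤ projLang (M.acceptsFrom s) := by
  rintro _ ⟨_, ⟨a, ha, rfl⟩, _, ⟨w, hw, rfl⟩, rfl⟩
  refine ⟨(a, b) :: w, M.mem_acceptsFrom.2 ?_, rfl⟩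
  rwa [DFA.evalFrom_cons, h a ha]

end General

section ChainLang

variable {σ : Type}

def factorLang (p : Set σ × Bool) : Language σ :=
  if p.2 then (singleLang p.1)∗ else singleLang p.1

theorem chainLang_nil : chainLang ([] : List (Set σ × Bool)) = 1 := rfl

theorem chainLang_cons_s5 (p : Set σ × Bool) (l : List (Set σ × Bool)) :
    chainLang (p :: l) = factorLang p * chainLang l := by
  simp [chainLang, factorLang]

variable (ts : List (Set σ × Bool))

/-- Past the end of `ts` this is `(∅, false)`, which admits no letter. -/
abbrev entry (k : ℕ) : Set σ × Bool := ts.getD k (∅, false)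

def Skippable (i j : ℕ) : Prop := ∀ k, i ≤ k → k < j → (entry ts k).2 = true

variable {ts}

theorem Skippable.trans {i j k : ℕ} (hij : Skippable ts i j) (hjk : Skippable ts j k) :
    Skippable ts i k := fun m him hmk =>
  if hmj : m < j then hij m him hmj else hjk m (by omega) hmk

theorem skippable_self (i : ℕ) : Skippable ts i i := fun _ hik hki => absurd hki (not_lt.2 hik)

theorem skippable_succ {i : ℕ} (hb : (entry ts i).2 = true) : Skippable ts i (i + 1) :=
  fun _ hik hki => le_antisymm (Nat.le_of_lt_succ hki) hik ▸ hb

theorem lt_length_of_mem_entry {k : ℕ} {a : σ} (ha : a ∈ (entry ts k).1) : k < ts.length := by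
  by_contra! hk
  rw [entry, List.getD_eq_default _ _ hk] at ha
  exact ha

theorem lt_length_of_entry_snd {k : ℕ} (hk : (entry ts k).2 = true) : k < ts.length := by
  by_contra! hk'
  rw [entry, List.getD_eq_default _ _ hk'] at hk
  exact Bool.false_ne_true hk

theorem chainLang_drop_eq_mul {k : ℕ} (hk : k < ts.length) :
    chainLang (ts.drop k) = factorLang (entry ts k) * chainLang (ts.drop (k + 1)) := by
  rw [List.drop_eq_getElem_cons hk, chainLang_cons_s5, entry, List.getD_eq_getElem _ _ hk]

theorem chainLang_drop_eq_singleLang_mul {k : ℕ} (hk : k < ts.length)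
    (hb : (entry ts k).2 = false) :
    chainLang (ts.drop k) = singleLang (entry ts k).1 * chainLang (ts.drop (k + 1)) := by
  rw [chainLang_drop_eq_mul hk, factorLang, hb, if_neg Bool.false_ne_true]

theorem chainLang_drop_eq_kstar_mul {k : ℕ} (hb : (entry ts k).2 = true) :
    chainLang (ts.drop k) = (singleLang (entry ts k).1)∗ * chainLang (ts.drop (k + 1)) := by
  rw [chainLang_drop_eq_mul (lt_length_of_entry_snd hb), factorLang, if_pos hb]

theorem singleLang_mul_chainLang_drop_le {k : ℕ} (hb : (entry ts k).2 = true) :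
    singleLang (entry ts k).1 * chainLang (ts.drop k) ≤ chainLang (ts.drop k) := by
  rw [chainLang_drop_eq_kstar_mul hb, ← mul_assoc]
  exact mul_le_mul_left (mul_kstar_le_kstar (a := singleLang (entry ts k).1)) _

theorem chainLang_drop_le_of_skippable {i j : ℕ} (hij : i ≤ j) (h : Skippable ts i j) :
    chainLang (ts.drop j) ≤ chainLang (ts.drop i) := by
  induction j, hij using Nat.le_induction with
  | base => exact le_rfl
  | succ j hij ih =>
    have hb : (entry ts j).2 = true := h j hij (Nat.lt_succ_self j)
    calc chainLang (ts.drop (j + 1))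
        = 1 * chainLang (ts.drop (j + 1)) := (one_mul _).symm
      _ ≤ chainLang (ts.drop j) := by
          rw [chainLang_drop_eq_kstar_mul hb]
          exact mul_le_mul_left (one_le_kstar (a := singleLang (entry ts j).1)) _
      _ ≤ chainLang (ts.drop i) := ih fun k hik hkj => h k hik (by omega)

theorem nil_mem_chainLang_drop {i : ℕ} (hi : i ≤ ts.length) (h : Skippable ts i ts.length) :
    [] ∈ chainLang (ts.drop i) :=
  chainLang_drop_le_of_skippable hi h (by rw [List.drop_length, chainLang_nil]; exact Language.nil_mem_one)

end ChainLang

namespace ChainDFA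

variable {σ : Type} (ts : List (Set σ × Bool))

open Classical in
/-- The `Fin` successor `j + 1` never wraps around, since `entry ts ts.length` admits no letter. -/
noncomputable def dfa : DFA (σ × Fin (ts.length + 1)) (Option (Fin (ts.length + 1))) where
  step
    | none, _ => none
    | some i, (a, j) =>
      if i ≤ j ∧ Skippable ts i j ∧ a ∈ (entry ts j).1 then
        some (if (entry ts j).2 then j else j + 1)
      else none
  start := some 0
  accept := some '' {i | Skippable ts i ts.length}

variable {ts}

open Classical in
theorem step_some (i j : Fin (ts.length + 1)) (a : σ) :
    (dfa ts).step (some i) (a, j) =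
      if i ≤ j ∧ Skippable ts i j ∧ a ∈ (entry ts j).1 then
        some (if (entry ts j).2 then j else j + 1)
      else none := rfl

theorem some_mem_accept {i : Fin (ts.length + 1)} :
    some i ∈ (dfa ts).accept ↔ Skippable ts i ts.length := by
  simp [dfa]

theorem evalFrom_none (w : List (σ × Fin (ts.length + 1))) : (dfa ts).evalFrom none w = none := by
  induction w with
  | nil => rfl
  | cons x w ih => exact ih

theorem none_notMem_accept : none ∉ (dfa ts).accept := by
  simp [dfa]

theorem acceptsFrom_le_of_skippable {i i' : Fin (ts.length + 1)} (hii' : i ≤ i')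
    (h : Skippable ts i i') : (dfa ts).acceptsFrom (some i') ≤ (dfa ts).acceptsFrom (some i) := by
  rintro (_ | ⟨⟨a, j⟩, w⟩) hw
  · exact some_mem_accept.2 (h.trans (some_mem_accept.1 hw))
  · change _ ∈ (dfa ts).accept at hw ⊢
    rw [DFA.evalFrom_cons, step_some] at hw ⊢
    by_cases hc : i' ≤ j ∧ Skippable ts i' j ∧ a ∈ (entry ts j).1
    · rw [if_pos hc] at hw
      rwa [if_pos ⟨hii'.trans hc.1, h.trans hc.2.1, hc.2.2⟩]
    · rw [if_neg hc, evalFrom_none] at hw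
      exact absurd hw none_notMem_accept

theorem projLang_acceptsFrom_le (i : Fin (ts.length + 1)) :
    projLang ((dfa ts).acceptsFrom (some i)) ≤ chainLang (ts.drop i) := by
  rintro _ ⟨w, hw, rfl⟩
  induction w generalizing i with
  | nil => exact nil_mem_chainLang_drop i.is_le (some_mem_accept.1 hw)
  | cons x w ih =>
    obtain ⟨a, j⟩ := x
    change _ ∈ (dfa ts).accept at hw
    rw [DFA.evalFrom_cons, step_some] at hw
    by_cases hc : i ≤ j ∧ Skippable ts i j ∧ a ∈ (entry ts j).1
    · obtain ⟨hij, hskip, ha⟩ := hc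
      rw [if_pos ⟨hij, hskip, ha⟩] at hw
      refine chainLang_drop_le_of_skippable hij hskip ?_
      cases hb : (entry ts j).2
      · have hj : (j : ℕ) < ts.length := lt_length_of_mem_entry ha
        have hsucc : ((j + 1 : Fin (ts.length + 1)) : ℕ) = j + 1 :=
          Fin.val_add_one_of_lt' (by omega)
        rw [hb, if_neg Bool.false_ne_true] at hw
        rw [chainLang_drop_eq_singleLang_mul hj hb, ← hsucc]
        exact Language.append_mem_mul (a := [a]) ⟨a, ha, rfl⟩ (ih (j + 1) hw)
      · rw [hb, if_pos rfl] at hw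
        exact singleLang_mul_chainLang_drop_le hb
          (Language.append_mem_mul (a := [a]) ⟨a, ha, rfl⟩ (ih j hw))
    · rw [if_neg hc, evalFrom_none] at hw
      exact absurd hw none_notMem_accept

theorem chainLang_drop_le_projLang_acceptsFrom (i : Fin (ts.length + 1)) :
    chainLang (ts.drop i) ≤ projLang ((dfa ts).acceptsFrom (some i)) := by
  induction i using Fin.reverseInduction with
  | last =>
    rw [Fin.val_last, List.drop_length, chainLang_nil]
    rintro u (rfl : u = [])
    exact ⟨[], some_mem_accept.2 (skippable_self _), rfl⟩
  | cast i ih =>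
    have hi : (i : ℕ) < ts.length := i.is_lt
    set S := (entry ts i).1
    rw [Fin.val_castSucc]
    cases hb : (entry ts i).2
    · have hstep : ∀ a ∈ S, (dfa ts).step (some i.castSucc) (a, i.castSucc) = some i.succ :=
        fun a ha => by
          rw [step_some, if_pos ⟨le_rfl, skippable_self _, ha⟩, Fin.val_castSucc, hb,
            if_neg Bool.false_ne_true, Fin.coeSucc_eq_succ]
      rw [chainLang_drop_eq_singleLang_mul hi hb]
      exact (mul_le_mul_right ih _).trans
        (singleLang_mul_projLang_acceptsFrom_le _ i.castSucc hstep)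
    · have hstep : ∀ a ∈ S, (dfa ts).step (some i.castSucc) (a, i.castSucc) = some i.castSucc :=
        fun a ha => by
          rw [step_some, if_pos ⟨le_rfl, skippable_self _, ha⟩, Fin.val_castSucc, hb, if_pos rfl]
      have hsucc : projLang ((dfa ts).acceptsFrom (some i.succ)) ≤
          projLang ((dfa ts).acceptsFrom (some i.castSucc)) :=
        projLang_mono (acceptsFrom_le_of_skippable (Fin.castSucc_le_succ i) (skippable_succ hb))
      rw [chainLang_drop_eq_kstar_mul hb]
      exact (mul_le_mul_right (ih.trans hsucc) _).trans
        (kstar_mul_le_self (singleLang_mul_projLang_acceptsFrom_le _ i.castSucc hstep))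

theorem projLang_acceptsFrom_eq (i : Fin (ts.length + 1)) :
    projLang ((dfa ts).acceptsFrom (some i)) = chainLang (ts.drop i) :=
  le_antisymm (projLang_acceptsFrom_le i) (chainLang_drop_le_projLang_acceptsFrom i)

end ChainDFA

/-- For every list `ts` of `n` pairs, there exist a finite type `S` with `card S ≤ n + 3`
and a DFA `D` over the product alphabet `σ × Fin (n+1)` with state type `S` such that
`π(D.accepts) = L(ts)`. -/
theorem chain_dfa_free_inputs {σ : Type} (ts : List (Set σ × Bool)) :
    ∃ (S : Type) (_ : Fintype S), Fintype.card S ≤ ts.length + 3 ∧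
      ∃ D : DFA (σ × Fin (ts.length + 1)) S, projLang D.accepts = chainLang ts := by
  refine ⟨Option (Fin (ts.length + 1)), inferInstance, by simp, ChainDFA.dfa ts, ?_⟩
  exact (ChainDFA.projLang_acceptsFrom_eq 0).trans (by simp)
end
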